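/- With [s]_x = 1 - x^s, T_s = T [s]_x [s+3]_x / ([s+1]_x [s+2]_x), T = (1+4x+x^2)/(1+x+x^2), g = x(1+x+x^2)/(1+4x+x^2)^2, and N_{s,t} = ([3]_x [s+2]_x [t+2]_x [s+t+3]_x)/([2]_x [s+3]_x [t+3]_x [s+t+2]_x), the identity N_{s,t} = 1 + g^2 T_s T_t N_{s,t} · (T_{s+1} T_{t+1} N_{s+1,t+1}) / (1 - g T_{s+1} T_{t+1} N_{s+1,t+1}) holds as an identity of rational functions in x, for all natural numbers s, t (assuming the denominator 1 - g T_{s+1} T_{t+1} N_{s+1,t+1} is nonzero as a rational function). -/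

import Mathlib

noncomputable section

/-- The field of rational functions in one variable over ℚ. -/
abbrev K := RatFunc ℚ

/-- The formal variable x. -/
def x : K := RatFunc.X

/-- [s]_x = 1 - x^s. -/
def br (s : ℕ) : K := 1 - x ^ s

/-- T = (1+4x+x²)/(1+x+x²). -/
def T : K := (1 + 4 * x + x ^ 2) / (1 + x + x ^ 2)

/-- g = x(1+x+x²)/(1+4x+x²)². -/
def g : K := x * (1 + x + x ^ 2) / (1 + 4 * x + x ^ 2) ^ 2

/-- T_s = T [s]_x [s+3]_x / ([s+1]_x [s+2]_x). -/
def Ts (s : ℕ) : K := T * br s * br (s + 3) / (br (s + 1) * br (s + 2))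

/-- N_{s,t}. -/
def N (s t : ℕ) : K :=
  br 3 * br (s + 2) * br (t + 2) * br (s + t + 3) /
    (br 2 * br (s + 3) * br (t + 3) * br (s + t + 2))

/-- X_{s,t}. -/
def Xc (s t : ℕ) : K :=
  br 3 * br (s + 1) * br (t + 1) * br (s + t + 3) /
    (br 1 * br (s + 3) * br (t + 3) * br (s + t + 1))

/-!
Since `g T² = x / (1 + x + x²)` and `[3]/[2] = (1 + x + x²)/(1 + x)`, the product
`M_{s,t} = g T_s T_t N_{s,t}` collapses to `x [s] [t] [s+t+3] / ((1 + x) [s+1] [t+1] [s+t+2])`.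
With `Q = M_{s+1,t+1}` the recursion reads `N = 1 + M Q / (1 - Q)`, i.e. `(N - 1)(1 - Q) = M Q`,
which after clearing denominators is a polynomial identity in `x`, `x^s` and `x^t`.
-/

open Polynomial

lemma algebraMap_ne_zero_of_eval_ne_zero {p : ℚ[X]} (a : ℚ) (h : p.eval a ≠ 0) :
    algebraMap ℚ[X] K p ≠ 0 :=
  RatFunc.algebraMap_ne_zero fun hp => h (by rw [hp, eval_zero])

lemma br_ne_zero {n : ℕ} (hn : n ≠ 0) : br n ≠ 0 := by
  have e : br n = algebraMap ℚ[X] K (1 - X ^ n) := by simp [br, x]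
  rw [e]
  refine algebraMap_ne_zero_of_eval_ne_zero 2 ?_
  rw [eval_sub, eval_one, eval_pow, eval_X]
  exact sub_ne_zero.mpr (one_lt_pow₀ (one_lt_two : (1 : ℚ) < 2) hn).ne

lemma br_succ_ne_zero (n : ℕ) : br (n + 1) ≠ 0 := br_ne_zero n.succ_ne_zero

lemma one_add_x_ne_zero : (1 + x : K) ≠ 0 := by
  have e : (1 + x : K) = algebraMap ℚ[X] K (1 + X) := by simp [x]
  rw [e]
  exact algebraMap_ne_zero_of_eval_ne_zero 1 (by norm_num)

lemma one_add_x_add_sq_ne_zero : (1 + x + x ^ 2 : K) ≠ 0 := by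
  have e : (1 + x + x ^ 2 : K) = algebraMap ℚ[X] K (1 + X + X ^ 2) := by simp [x]
  rw [e]
  exact algebraMap_ne_zero_of_eval_ne_zero 1 (by norm_num)

lemma one_add_four_x_add_sq_ne_zero : (1 + 4 * x + x ^ 2 : K) ≠ 0 := by
  have e : (1 + 4 * x + x ^ 2 : K) = algebraMap ℚ[X] K (1 + 4 * X + X ^ 2) := by
    simp [x, map_ofNat]
  rw [e]
  exact algebraMap_ne_zero_of_eval_ne_zero 1 (by norm_num)

lemma one_sub_x_ne_zero : (1 - x : K) ≠ 0 := by
  simpa [br] using br_ne_zero one_ne_zero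

lemma g_mul_T_sq : g * T ^ 2 = x / (1 + x + x ^ 2) := by
  have h1 := one_add_x_add_sq_ne_zero
  have h4 := one_add_four_x_add_sq_ne_zero
  rw [g, T, div_pow, div_mul_div_comm,
    div_eq_div_iff (mul_ne_zero (pow_ne_zero 2 h4) (pow_ne_zero 2 h1)) h1]
  ring

lemma g_mul_Ts_mul_Ts_mul_N (s t : ℕ) : g * Ts s * Ts t * N s t =
    x * br s * br t * br (s + t + 3) /
      ((1 + x) * br (s + 1) * br (t + 1) * br (s + t + 2)) := by
  have h3 : br 3 = (1 - x) * (1 + x + x ^ 2) := by rw [br]; ring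
  have h2 : br 2 = (1 - x) * (1 + x) := by rw [br]; ring
  calc g * Ts s * Ts t * N s t
      = g * T ^ 2 * (br 3 / br 2) * (br s * br t * br (s + t + 3) /
          (br (s + 1) * br (t + 1) * br (s + t + 2))) := by
        simp only [Ts, N]; field_simp [br_succ_ne_zero]
    _ = _ := by
        rw [g_mul_T_sq, h3, h2]
        field_simp [br_succ_ne_zero, one_add_x_add_sq_ne_zero, one_add_x_ne_zero, one_sub_x_ne_zero]

lemma N_sub_one_mul_one_sub (s t : ℕ) :
    (N s t - 1) * (1 - g * Ts (s + 1) * Ts (t + 1) * N (s + 1) (t + 1)) =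
      g * Ts s * Ts t * N s t * (g * Ts (s + 1) * Ts (t + 1) * N (s + 1) (t + 1)) := by
  rw [g_mul_Ts_mul_Ts_mul_N, g_mul_Ts_mul_Ts_mul_N, N]
  field_simp [br_succ_ne_zero, one_add_x_ne_zero]
  simp only [br]
  ring

theorem N_recursion (s t : ℕ)
    (h : 1 - g * Ts (s + 1) * Ts (t + 1) * N (s + 1) (t + 1) ≠ 0) :
    N s t = 1 + g ^ 2 * Ts s * Ts t * N s t *
      (Ts (s + 1) * Ts (t + 1) * N (s + 1) (t + 1) /
        (1 - g * Ts (s + 1) * Ts (t + 1) * N (s + 1) (t + 1))) := by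
  rw [← sub_eq_iff_eq_add', mul_div_assoc', eq_div_iff h, N_sub_one_mul_one_sub]
  ring
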